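/- Let Z_1,…,Z_n be i.i.d. with distribution P0 and let X_1,…,X_m be independent random variables, independent of (Z_1,…,Z_n), of which the m0 variables indexed by the null set H0 have distribution P0; assume the score distribution under P0 is atomless. For each i let p̂_i be the empirical p-value of X_i computed using the single shared calibration set {Z_1,…,Z_n}. If there exists an integer ℓ ≥ 1 with ℓm/α an integer and n = ℓm/α − 1, then the BH procedure at level α applied to (p̂_1,…,p̂_m) achieves exact FDR control: FDR = m0·α/m. -/

import Mathlib

open MeasureTheory ProbabilityTheory Finset
open scoped Classical ENNReal

/-- Hypothesis `i` is rejected by the Benjamini–Hochberg procedure at level `α`. -/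
def bhRejects (m : ℕ) (α : ℝ) (p : Fin m → ℝ) (i : Fin m) : Prop :=
  ∃ k ∈ Finset.Icc 1 m,
    p i ≤ α * k / m ∧
      k ≤ (Finset.univ.filter fun j => p j ≤ α * (k : ℝ) / m).card

/-- Number of rejections of the BH procedure at level `α`. -/
noncomputable def bhR (m : ℕ) (α : ℝ) (p : Fin m → ℝ) : ℕ :=
  (Finset.univ.filter fun i => bhRejects m α p i).card

/-- Number of false positives (rejected null hypotheses) of BH at level `α`. -/
noncomputable def bhFP (m : ℕ) (α : ℝ) (H0 : Finset (Fin m)) (p : Fin m → ℝ) : ℕ :=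
  (H0.filter fun i => bhRejects m α p i).card

/-- False discovery proportion of BH at level `α` (with the convention 0/0 = 0). -/
noncomputable def bhFDP (m : ℕ) (α : ℝ) (H0 : Finset (Fin m)) (p : Fin m → ℝ) : ℝ :=
  (bhFP m α H0 p : ℝ) / (bhR m α p : ℝ)

/-- Empirical p-value of a point `x` with respect to the calibration set `z`. -/
noncomputable def empPval {𝒳 : Type*} (n : ℕ) (a : 𝒳 → ℝ) (x : 𝒳) (z : Fin n → 𝒳) : ℝ :=
  (1 / (n : ℝ)) * ∑ u : Fin n, if a x ≤ a (z u) then (1 : ℝ) else 0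

/-!
With `n + 1 = ℓ m / α`, the BH threshold `α k / m` equals `k ℓ / (n + 1)`, so on empirical
p-values BH rejects `j` iff the rank `r j` of its score among itself and the `n` calibration
scores (counted from the top) is at most `K ℓ`, where `K = max {k ≤ m | k ≤ #{j | r j ≤ k ℓ}}`
is the number of rejections.

Fix a null `i`. Its score and the calibration scores are i.i.d., so the joint law of all scores
is invariant under swapping `i` with any calibration point, and a.s. these `n + 1` scores are
distinct. Let `K*` be the cutoff computed from the ranks of all test scores inside this pool of
`n + 1`, with the rank of `i` set to `0`; it does not depend on which pooled value sits at `i`.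
Whichever value does, `i` is rejected iff its rank is at most `K* ℓ`, and then `R = K*`. Exactly
`K* ℓ` of the `n + 1` swaps put such a value at `i`, so the shares `1{i rejected} / R` sum to `ℓ`
over the swaps, and `E[1{i rejected} / R] = ℓ / (n + 1) = α / m`. Summing over the `m0` nulls
gives the FDR.
-/

noncomputable def bhCutoff (m : ℕ) (α : ℝ) (p : Fin m → ℝ) : ℕ :=
  Nat.findGreatest (fun k => k ≤ #{j | p j ≤ α * k / m}) m

section BenjaminiHochberg

variable {m : ℕ} {α : ℝ} {p : Fin m → ℝ}

lemma card_le_threshold_mono (hα : 0 ≤ α) {k k' : ℕ} (hk : k ≤ k') :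
    #{j | p j ≤ α * k / m} ≤ #{j | p j ≤ α * k' / m} := by
  refine card_le_card fun j => ?_
  simp only [mem_filter, mem_univ, true_and]
  exact fun hj => hj.trans (by gcongr)

lemma bhCutoff_le_card : bhCutoff m α p ≤ #{j | p j ≤ α * bhCutoff m α p / m} :=
  Nat.findGreatest_spec (P := fun k => k ≤ #{j | p j ≤ α * k / m}) m.zero_le (Nat.zero_le _)

lemma bhRejects_iff (hα : 0 ≤ α) (i : Fin m) :
    bhRejects m α p i ↔ 1 ≤ bhCutoff m α p ∧ p i ≤ α * bhCutoff m α p / m := by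
  constructor
  · rintro ⟨k, hk, hpk, hkN⟩
    have hkK : k ≤ bhCutoff m α p := Nat.le_findGreatest (mem_Icc.1 hk).2 hkN
    refine ⟨(mem_Icc.1 hk).1.trans hkK, hpk.trans ?_⟩
    gcongr
  · rintro ⟨hK, hpK⟩
    exact ⟨_, mem_Icc.2 ⟨hK, Nat.findGreatest_le m⟩, hpK, bhCutoff_le_card⟩

lemma bhR_eq_bhCutoff (hα : 0 ≤ α) : bhR m α p = bhCutoff m α p := by
  obtain hK | hK : bhCutoff m α p = 0 ∨ 1 ≤ bhCutoff m α p := by omega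
  · simp [bhR, bhRejects_iff hα, hK]
  have hR : bhR m α p = #{j | p j ≤ α * bhCutoff m α p / m} := by
    simp only [bhR, bhRejects_iff hα, hK, true_and]
  rw [hR]
  refine le_antisymm ?_ bhCutoff_le_card
  -- `N = #{j | p j ≤ α K / m}` is itself admissible, since `K ≤ N`.
  exact Nat.le_findGreatest (card_le_univ _ |>.trans_eq (Fintype.card_fin m))
    (card_le_threshold_mono hα bhCutoff_le_card)

lemma bhFDP_eq_sum (H0 : Finset (Fin m)) :
    bhFDP m α H0 p = ∑ i ∈ H0, if bhRejects m α p i then (bhR m α p : ℝ)⁻¹ else 0 := by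
  rw [bhFDP, bhFP, div_eq_mul_inv, natCast_card_filter, sum_mul]
  refine sum_congr rfl fun i _ => ?_
  split_ifs <;> simp

end BenjaminiHochberg

noncomputable def rankCutoff {m : ℕ} (ℓ : ℕ) (r : Fin m → ℕ) : ℕ :=
  Nat.findGreatest (fun k => k ≤ #{j | r j ≤ k * ℓ}) m

noncomputable def rankShare {m : ℕ} (ℓ : ℕ) (r : Fin m → ℕ) (i : Fin m) : ℝ :=
  if r i ≤ rankCutoff ℓ r * ℓ then (rankCutoff ℓ r : ℝ)⁻¹ else 0

section RankCutoff

variable {m ℓ : ℕ} {r r' : Fin m → ℕ}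

lemma rankCutoff_le_card : rankCutoff ℓ r ≤ #{j | r j ≤ rankCutoff ℓ r * ℓ} :=
  Nat.findGreatest_spec (P := fun k => k ≤ #{j | r j ≤ k * ℓ}) m.zero_le (Nat.zero_le _)

lemma rankCutoff_anti (h : ∀ j, r' j ≤ r j) : rankCutoff ℓ r ≤ rankCutoff ℓ r' := by
  refine Nat.findGreatest_mono_left (fun k hk => hk.trans (card_le_card fun j => ?_)) m
  simp only [mem_filter, mem_univ, true_and]
  exact (h j).trans

lemma one_le_rankCutoff {i : Fin m} (hi : r i = 0) : 1 ≤ rankCutoff ℓ r :=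
  Nat.le_findGreatest i.pos (card_pos.2 ⟨i, by simp [hi]⟩)

lemma abs_rankShare_le_one (i : Fin m) : |rankShare ℓ r i| ≤ 1 := by
  unfold rankShare
  split_ifs
  · rw [abs_of_nonneg (by positivity)]
    exact Nat.cast_inv_le_one _
  · simp

/-- Leave-one-out property of BH: raising the ranks of `r'`, but never above `r i`, cannot
change the cutoff as long as `i` itself passes it. -/
lemma rankShare_eq_of_le_of_le_max {i : Fin m} (h₁ : ∀ j, r' j ≤ r j)
    (h₂ : ∀ j, r j ≤ max (r' j) (r i)) :
    rankShare ℓ r i = if r i ≤ rankCutoff ℓ r' * ℓ then (rankCutoff ℓ r' : ℝ)⁻¹ else 0 := by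
  by_cases hi : r i ≤ rankCutoff ℓ r' * ℓ
  · have hK : rankCutoff ℓ r = rankCutoff ℓ r' := by
      refine le_antisymm (rankCutoff_anti h₁) (Nat.le_findGreatest (Nat.findGreatest_le m) ?_)
      refine rankCutoff_le_card.trans (card_le_card fun j => ?_)
      simp only [mem_filter, mem_univ, true_and]
      exact fun hj => (h₂ j).trans (max_le hj hi)
    simp [rankShare, hK, hi]
  · have : ¬ r i ≤ rankCutoff ℓ r * ℓ := fun h =>
      hi (h.trans (Nat.mul_le_mul_right ℓ (rankCutoff_anti h₁)))
    simp [rankShare, this, hi]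

end RankCutoff

noncomputable def calibCount {m n : ℕ} (y : Fin m ⊕ Fin n → ℝ) (j : Fin m) : ℕ :=
  #{u | y (.inl j) ≤ y (.inr u)}

noncomputable def scoreShare {m n : ℕ} (ℓ : ℕ) (i : Fin m) (y : Fin m ⊕ Fin n → ℝ) : ℝ :=
  rankShare ℓ (fun j => calibCount y j + 1) i

lemma empPval_eq {𝒳 : Type*} (n : ℕ) (a : 𝒳 → ℝ) (x : 𝒳) (z : Fin n → 𝒳) :
    empPval n a x z = (#{u | a x ≤ a (z u)} : ℝ) / n := by
  rw [empPval, sum_boole, one_div_mul_eq_div]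

lemma div_le_div_succ_iff {c n K : ℕ} (hc : c ≤ n) (hK : 1 ≤ K) :
    (c : ℝ) / n ≤ K / (n + 1) ↔ c + 1 ≤ K := by
  rcases Nat.eq_zero_or_pos n with rfl | hn
  · obtain rfl : c = 0 := by omega
    simpa using hK
  rw [div_le_div_iff₀ (by positivity) (by positivity)]
  norm_cast
  constructor
  · intro h
    by_contra! hlt
    nlinarith
  · intro h
    nlinarith

section EmpiricalPValues

variable {m n ℓ : ℕ} {α : ℝ} (y : Fin m ⊕ Fin n → ℝ)

lemma calibCount_le (j : Fin m) : calibCount y j ≤ n :=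
  card_le_univ _ |>.trans_eq (Fintype.card_fin n)

lemma calibCount_div_le_iff (hαm : α / m = ℓ / (n + 1)) (hℓ : 1 ≤ ℓ) {k : ℕ} (hk : 1 ≤ k)
    (j : Fin m) : (calibCount y j : ℝ) / n ≤ α * k / m ↔ calibCount y j + 1 ≤ k * ℓ := by
  rw [mul_div_right_comm, hαm, div_mul_eq_mul_div, mul_comm (ℓ : ℝ)]
  exact_mod_cast div_le_div_succ_iff (calibCount_le y j) (Nat.one_le_iff_ne_zero.2 (by positivity))

lemma bhCutoff_calibCount (hαm : α / m = ℓ / (n + 1)) (hℓ : 1 ≤ ℓ) :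
    bhCutoff m α (fun j => calibCount y j / n) = rankCutoff ℓ (fun j => calibCount y j + 1) := by
  have hcard : ∀ k : ℕ, k ≤ #{j | (calibCount y j : ℝ) / n ≤ α * k / m} ↔
      k ≤ #{j | calibCount y j + 1 ≤ k * ℓ} := by
    intro k
    obtain rfl | hk : k = 0 ∨ 1 ≤ k := by omega
    · simp
    simp only [calibCount_div_le_iff y hαm hℓ hk]
  exact le_antisymm (Nat.findGreatest_mono_left (fun k => (hcard k).1) m)
    (Nat.findGreatest_mono_left (fun k => (hcard k).2) m)

lemma bhFDP_calibCount (hα : 0 ≤ α) (hαm : α / m = ℓ / (n + 1)) (hℓ : 1 ≤ ℓ)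
    (H0 : Finset (Fin m)) :
    bhFDP m α H0 (fun j => calibCount y j / n) = ∑ i ∈ H0, scoreShare ℓ i y := by
  rw [bhFDP_eq_sum, bhR_eq_bhCutoff hα, bhCutoff_calibCount y hαm hℓ]
  refine sum_congr rfl fun i _ => ?_
  simp only [bhRejects_iff hα, bhCutoff_calibCount y hαm hℓ, scoreShare, rankShare]
  obtain hK | hK : rankCutoff ℓ (fun j => calibCount y j + 1) = 0 ∨
      1 ≤ rankCutoff ℓ (fun j => calibCount y j + 1) := by omega
  · simp [hK]
  simp only [calibCount_div_le_iff y hαm hℓ hK, hK, true_and]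

end EmpiricalPValues

noncomputable def rankIn {ι : Type*} (S : Finset ι) (y : ι → ℝ) (x : ℝ) : ℕ :=
  #{c ∈ S | x ≤ y c}

section Ranks

variable {ι : Type*} {S : Finset ι} {y : ι → ℝ} {c : ι}

lemma card_filter_erase_add_ite [DecidableEq ι] (hc : c ∈ S) (x : ℝ) :
    #{c' ∈ S.erase c | x ≤ y c'} + (if x ≤ y c then 1 else 0) = rankIn S y x := by
  rw [rankIn, filter_erase]
  split_ifs with hx
  · exact card_erase_add_one (mem_filter.2 ⟨hc, hx⟩)
  · rw [erase_eq_of_notMem (by simp [hx]), add_zero]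

lemma rankIn_lt_rankIn (hc : c ∈ S) {x : ℝ} (hx : y c < x) :
    rankIn S y x < rankIn S y (y c) := by
  refine card_lt_card ⟨monotone_filter_right S fun c' _ h => hx.le.trans h, fun h => ?_⟩
  have := (mem_filter.1 (h (mem_filter.2 ⟨hc, le_rfl⟩))).2
  exact absurd hx this.not_gt

lemma rankIn_mem_Icc (hc : c ∈ S) : rankIn S y (y c) ∈ Icc 1 #S :=
  mem_Icc.2 ⟨card_pos.2 ⟨c, mem_filter.2 ⟨hc, le_rfl⟩⟩, card_filter_le _ _⟩

/-- Distinct values have ranks exactly `1, …, #S`. -/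
lemma card_filter_rankIn_le (hy : Set.InjOn y S) {K : ℕ} (hK : K ≤ #S) :
    #{c ∈ S | rankIn S y (y c) ≤ K} = K := by
  have hinj : Set.InjOn (fun c => rankIn S y (y c)) S := by
    intro c hc c' hc' h
    by_contra hne
    rcases (hy.ne hc hc' hne).lt_or_gt with hlt | hlt
    · exact (rankIn_lt_rankIn hc hlt).ne' h
    · exact (rankIn_lt_rankIn hc' hlt).ne h
  have himage : S.image (fun c => rankIn S y (y c)) = Icc 1 #S := by
    refine eq_of_subset_of_card_le (image_subset_iff.2 fun c hc => rankIn_mem_Icc hc) ?_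
    rw [card_image_of_injOn hinj, Nat.card_Icc, Nat.add_sub_cancel]
  calc #{c ∈ S | rankIn S y (y c) ≤ K}
      = #{k ∈ S.image (fun c => rankIn S y (y c)) | k ≤ K} := by
        rw [filter_image, card_image_of_injOn (hinj.mono (filter_subset _ _))]
    _ = #(Icc 1 K) := by
        rw [himage]
        congr 1
        ext k
        simp only [mem_filter, mem_Icc]
        omega
    _ = K := by simp

end Ranks

def augCalib {m : ℕ} (n : ℕ) (i : Fin m) : Finset (Fin m ⊕ Fin n) :=
  insert (.inl i) (univ.map .inr)

noncomputable def leaveOneOutRank {m n : ℕ} (i : Fin m) (y : Fin m ⊕ Fin n → ℝ) : Fin m → ℕ :=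
  Function.update (fun j => rankIn (augCalib n i) y (y (.inl j))) i 0

section Swap

open Equiv

variable {m n : ℕ} {i : Fin m} {c : Fin m ⊕ Fin n} (y : Fin m ⊕ Fin n → ℝ)

lemma card_augCalib (i : Fin m) : #(augCalib n i) = n + 1 := by
  simp [augCalib]

lemma map_inr_swap (hc : c ∈ augCalib n i) :
    (univ.map .inr).map (swap (.inl i) c).toEmbedding = (augCalib n i).erase c := by
  have hS : (augCalib n i).map (swap (.inl i) c).toEmbedding = augCalib n i := by
    refine map_perm fun x hx => ?_
    by_contra hxS
    exact hx (swap_apply_of_ne_of_ne (by rintro rfl; simp [augCalib] at hxS)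
      (by rintro rfl; exact hxS hc))
  have hA : univ.map .inr = (augCalib n i).erase (.inl i) := by simp [augCalib]
  rw [hA, map_erase, hS]
  simp

lemma calibCount_comp_swap (hc : c ∈ augCalib n i) (j : Fin m) :
    calibCount (y ∘ swap (.inl i) c) j =
      #{c' ∈ (augCalib n i).erase c | y (swap (.inl i) c (.inl j)) ≤ y c'} := by
  rw [← map_inr_swap hc, map_map, filter_map, card_map]
  rfl

lemma calibCount_comp_swap_self (hc : c ∈ augCalib n i) :
    calibCount (y ∘ swap (.inl i) c) i + 1 = rankIn (augCalib n i) y (y c) := by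
  rw [calibCount_comp_swap y hc, swap_apply_left, ← card_filter_erase_add_ite hc, if_pos le_rfl]

lemma calibCount_comp_swap_of_ne (hc : c ∈ augCalib n i) {j : Fin m} (hj : j ≠ i) :
    calibCount (y ∘ swap (.inl i) c) j + (if y (.inl j) ≤ y c then 1 else 0) =
      rankIn (augCalib n i) y (y (.inl j)) := by
  have hjc : (.inl j : Fin m ⊕ Fin n) ≠ c := by
    rintro rfl
    simp [augCalib, hj] at hc
  rw [calibCount_comp_swap y hc, swap_apply_of_ne_of_ne (by simpa using hj) hjc,
    card_filter_erase_add_ite hc]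

lemma leaveOneOutRank_le (hc : c ∈ augCalib n i) (j : Fin m) :
    leaveOneOutRank i y j ≤ calibCount (y ∘ swap (.inl i) c) j + 1 := by
  rcases eq_or_ne j i with rfl | hj
  · simp [leaveOneOutRank]
  · rw [leaveOneOutRank, Function.update_of_ne hj, ← calibCount_comp_swap_of_ne y hc hj]
    split_ifs <;> omega

lemma calibCount_comp_swap_le_max (hc : c ∈ augCalib n i) (j : Fin m) :
    calibCount (y ∘ swap (.inl i) c) j + 1 ≤
      max (leaveOneOutRank i y j) (calibCount (y ∘ swap (.inl i) c) i + 1) := by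
  rcases eq_or_ne j i with rfl | hj
  · exact le_max_right _ _
  have h := calibCount_comp_swap_of_ne y hc hj
  rw [leaveOneOutRank, Function.update_of_ne hj, calibCount_comp_swap_self y hc]
  split_ifs at h with hle
  · omega
  · have := rankIn_lt_rankIn hc (not_le.1 hle)
    omega

lemma scoreShare_comp_swap (ℓ : ℕ) (hc : c ∈ augCalib n i) :
    scoreShare ℓ i (y ∘ swap (.inl i) c) =
      if rankIn (augCalib n i) y (y c) ≤ rankCutoff ℓ (leaveOneOutRank i y) * ℓ then
        (rankCutoff ℓ (leaveOneOutRank i y) : ℝ)⁻¹ else 0 := by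
  rw [scoreShare, rankShare_eq_of_le_of_le_max (leaveOneOutRank_le y hc)
    (calibCount_comp_swap_le_max y hc), calibCount_comp_swap_self y hc]

lemma sum_scoreShare_comp_swap {ℓ : ℕ} (hy : Set.InjOn y (augCalib n i)) (hmℓ : m * ℓ ≤ n + 1) :
    ∑ c ∈ augCalib n i, scoreShare ℓ i (y ∘ swap (.inl i) c) = ℓ := by
  set K := rankCutoff ℓ (leaveOneOutRank i y)
  have hK : 1 ≤ K := one_le_rankCutoff (i := i) (by simp [leaveOneOutRank])
  have hKℓ : K * ℓ ≤ #(augCalib n i) := by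
    rw [card_augCalib]
    exact (Nat.mul_le_mul_right ℓ (Nat.findGreatest_le m)).trans hmℓ
  rw [sum_congr rfl fun c hc => scoreShare_comp_swap y ℓ hc, sum_ite, sum_const_zero, add_zero,
    sum_const, card_filter_rankIn_le hy hKℓ, nsmul_eq_mul]
  push_cast
  exact mul_div_cancel_left₀ _ (by positivity : (K : ℝ) ≠ 0)

end Swap

lemma integral_comp_perm_pi {ι β E : Type*} [Fintype ι] [MeasurableSpace β]
    [NormedAddCommGroup E] [NormedSpace ℝ E] {ν : ι → Measure β} [∀ c, SigmaFinite (ν c)]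
    (σ : Equiv.Perm ι) (hσ : ∀ c, ν (σ c) = ν c) (f : (ι → β) → E) :
    ∫ y, f (y ∘ σ) ∂Measure.pi ν = ∫ y, f y ∂Measure.pi ν := by
  have h := measurePreserving_piCongrLeft (α := fun _ => β) ν σ.symm
  have hν : (fun c => ν (σ.symm c)) = ν := funext fun c => by simpa using (hσ (σ.symm c)).symm
  rw [hν] at h
  refine Eq.trans ?_ (h.integral_comp' f)
  congr with y
  refine congrArg f (funext fun c => ?_)
  simpa using (MeasurableEquiv.piCongrLeft_apply_apply (β := fun _ => β) σ.symm y (σ c)).symm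

lemma ProbabilityTheory.IndepFun.measure_eq_eq_zero {Ω : Type*} [MeasurableSpace Ω] {μ : Measure Ω}
    [IsFiniteMeasure μ] {X Y : Ω → ℝ} (hX : Measurable X) (hY : Measurable Y)
    (hXY : IndepFun X Y μ) (hY₀ : ∀ x, μ (Y ⁻¹' {x}) = 0) : μ {ω | X ω = Y ω} = 0 := by
  have hdiag : MeasurableSet {p : ℝ × ℝ | p.1 = p.2} :=
    measurableSet_eq_fun measurable_fst measurable_snd
  have hfib : ∀ x : ℝ, Prod.mk x ⁻¹' {p : ℝ × ℝ | p.1 = p.2} = {x} := fun x => by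
    ext z
    simp [eq_comm]
  change μ ((fun ω => (X ω, Y ω)) ⁻¹' {p | p.1 = p.2}) = 0
  rw [← Measure.map_apply (hX.prodMk hY) hdiag,
    hXY.map_prod_eq_prod_map_map hX.aemeasurable hY.aemeasurable, Measure.prod_apply hdiag]
  simp [hfib, Measure.map_apply hY (measurableSet_singleton _), hY₀]

lemma ae_injOn_pi {ι : Type*} [Fintype ι] {ν : ι → Measure ℝ} [∀ c, IsProbabilityMeasure (ν c)]
    {S : Finset ι} (hν : ∀ c ∈ S, ∀ x, ν c {x} = 0) :
    ∀ᵐ y ∂Measure.pi ν, Set.InjOn y S := by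
  have hindep := iIndepFun_pi (μ := ν) (X := fun _ => id) fun _ => aemeasurable_id
  have hsub : {y : ι → ℝ | ¬ Set.InjOn y S} ⊆
      ⋃ c ∈ S, ⋃ c' ∈ S, ⋃ (_ : c ≠ c'), {y | y c = y c'} := by
    intro y hy
    simp only [Set.InjOn, not_forall] at hy
    obtain ⟨c, hc, c', hc', hyc, hne⟩ := hy
    simp only [Set.mem_iUnion]
    exact ⟨c, hc, c', hc', hne, hyc⟩
  refine measure_mono_null hsub (measure_biUnion_null_iff S.countable_toSet |>.2 fun c _ =>
    measure_biUnion_null_iff S.countable_toSet |>.2 fun c' hc' =>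
      measure_iUnion_null fun hne => ?_)
  refine (hindep.indepFun hne).measure_eq_eq_zero (measurable_pi_apply c)
    (measurable_pi_apply c') fun x => ?_
  rw [← Measure.map_apply (measurable_pi_apply c') (measurableSet_singleton x),
    (measurePreserving_eval ν c').map_eq]
  exact hν c' hc' x

section Measurability

variable {m n : ℕ}

lemma measurable_calibCount (j : Fin m) :
    Measurable fun y : Fin m ⊕ Fin n → ℝ => calibCount y j := by
  simp_rw [calibCount, card_filter]
  exact Finset.measurable_sum _ fun u _ => Measurable.ite
    (measurableSet_le (measurable_pi_apply _) (measurable_pi_apply _))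
    measurable_const measurable_const

lemma measurable_scoreShare (ℓ : ℕ) (i : Fin m) :
    Measurable (scoreShare (n := n) ℓ i) :=
  (Measurable.of_discrete (f := fun c : Fin m → ℕ => rankShare ℓ (fun j => c j + 1) i)).comp
    (measurable_pi_lambda _ measurable_calibCount)

lemma Measurable.integrable_scoreShare {α : Type*} [MeasurableSpace α] {μ : Measure α}
    [IsFiniteMeasure μ] {g : α → Fin m ⊕ Fin n → ℝ} (hg : Measurable g) (ℓ : ℕ) (i : Fin m) :
    Integrable (fun x => scoreShare ℓ i (g x)) μ :=
  .of_bound ((measurable_scoreShare ℓ i).comp hg).aestronglyMeasurable 1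
    (ae_of_all _ fun _ => abs_rankShare_le_one i)

end Measurability

theorem integral_scoreShare {m n ℓ : ℕ} {ν : Fin m ⊕ Fin n → Measure ℝ}
    [∀ c, IsProbabilityMeasure (ν c)] (i : Fin m) (hmℓ : m * ℓ ≤ n + 1)
    (hν : ∀ c ∈ augCalib n i, ν c = ν (.inl i)) (hatom : ∀ x, ν (.inl i) {x} = 0) :
    ∫ y, scoreShare ℓ i y ∂Measure.pi ν = ℓ / (n + 1) := by
  set π := Measure.pi ν
  have hswap : ∀ c ∈ augCalib n i,
      ∫ y, scoreShare ℓ i (y ∘ Equiv.swap (.inl i) c) ∂π = ∫ y, scoreShare ℓ i y ∂π := by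
    refine fun c hc => integral_comp_perm_pi _ (fun c' => ?_) _
    rw [Equiv.swap_apply_def]
    split_ifs with h₁ h₂
    · rw [h₁, hν c hc]
    · rw [h₂, hν c hc]
    · rfl
  have hsum : ∀ᵐ y ∂π, ∑ c ∈ augCalib n i, scoreShare ℓ i (y ∘ Equiv.swap (.inl i) c) = ℓ :=
    (ae_injOn_pi fun c hc x => (hν c hc).symm ▸ hatom x).mono fun y hy =>
      sum_scoreShare_comp_swap y hy hmℓ
  have key : ((n : ℝ) + 1) * ∫ y, scoreShare ℓ i y ∂π = ℓ := calc
    _ = ∑ c ∈ augCalib n i, ∫ y, scoreShare ℓ i (y ∘ Equiv.swap (.inl i) c) ∂π := by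
      rw [sum_congr rfl hswap, sum_const, card_augCalib, nsmul_eq_mul]
      push_cast
      rfl
    _ = ∫ y, ∑ c ∈ augCalib n i, scoreShare ℓ i (y ∘ Equiv.swap (.inl i) c) ∂π :=
      (integral_finsetSum _ fun c _ =>
        (measurable_pi_lambda _ fun _ => measurable_pi_apply _).integrable_scoreShare ℓ i).symm
    _ = ℓ := by simp [integral_congr_ae hsum]
  rw [← key]
  field_simp

lemma div_eq_div_of_calibSize {m n ℓ : ℕ} {α : ℝ} (hα : 0 < α)
    (hcal : (n : ℝ) = ℓ * m / α - 1) : α / m = ℓ / (n + 1) := by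
  have h : (n : ℝ) + 1 = ℓ * m / α := by rw [hcal]; ring
  have hℓm : (ℓ * m : ℝ) ≠ 0 := fun h0 => by
    rw [h0, zero_div] at h
    linarith [(n.cast_nonneg : (0 : ℝ) ≤ n)]
  have hm : (m : ℝ) ≠ 0 := right_ne_zero_of_mul hℓm
  have hℓ : (ℓ : ℝ) ≠ 0 := left_ne_zero_of_mul hℓm
  rw [h]
  field_simp

lemma mul_le_succ_of_calibSize {m n ℓ : ℕ} {α : ℝ} (hα₀ : 0 < α) (hα₁ : α ≤ 1)
    (hcal : (n : ℝ) = ℓ * m / α - 1) : m * ℓ ≤ n + 1 := by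
  have : (m * ℓ : ℝ) ≤ n + 1 := by
    rw [hcal, sub_add_cancel, le_div_iff₀ hα₀]
    nlinarith [(by positivity : (0 : ℝ) ≤ m * ℓ)]
  exact_mod_cast this

theorem integral_scoreShare_of_iIndepFun {Ω : Type*} [MeasurableSpace Ω] {μ : Measure Ω}
    [IsProbabilityMeasure μ] {m n ℓ : ℕ} {F : Fin m ⊕ Fin n → Ω → ℝ}
    (hF : ∀ c, Measurable (F c)) (hind : iIndepFun F μ) (i : Fin m) (hmℓ : m * ℓ ≤ n + 1)
    (hlaw : ∀ c ∈ augCalib n i, μ.map (F c) = μ.map (F (.inl i)))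
    (hatom : ∀ x, μ.map (F (.inl i)) {x} = 0) :
    ∫ ω, scoreShare ℓ i (fun c => F c ω) ∂μ = ℓ / (n + 1) := by
  have := fun c => Measure.isProbabilityMeasure_map (μ := μ) (hF c).aemeasurable
  rw [← integral_map (measurable_pi_lambda _ hF).aemeasurable
    (measurable_scoreShare ℓ i).aestronglyMeasurable,
    hind.map_fun_eq_pi_map fun c => (hF c).aemeasurable]
  exact integral_scoreShare i hmℓ hlaw hatom

theorem bh_shared_calibration_exact_fdr_control_general
    {Ω 𝒳 : Type*} [MeasurableSpace Ω] [MeasurableSpace 𝒳]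
    (μ : Measure Ω) [IsProbabilityMeasure μ]
    (P0 : Measure 𝒳)
    (m n m0 : ℕ)
    (H0 : Finset (Fin m)) (hcard : H0.card = m0)
    (a : 𝒳 → ℝ) (ha : Measurable a)
    (X : Fin m → Ω → 𝒳) (Z : Fin n → Ω → 𝒳)
    (hXmeas : ∀ i, Measurable (X i)) (hZmeas : ∀ j, Measurable (Z j))
    (hindep : iIndepFun
      (Sum.elim X Z : Fin m ⊕ Fin n → Ω → 𝒳) μ)
    (hXlaw : ∀ i ∈ H0, μ.map (X i) = P0)
    (hZlaw : ∀ j, μ.map (Z j) = P0)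
    (hatomless : ∀ r : ℝ, P0 {x | a x = r} = 0)
    (α : ℝ) (hα : α ∈ Set.Ioc (0 : ℝ) 1)
    (hcal : ∃ ℓ : ℕ, 1 ≤ ℓ ∧ (n : ℝ) = (ℓ : ℝ) * m / α - 1) :
    ∫ ω, bhFDP m α H0 (fun j => empPval n a (X j ω) (fun u => Z u ω)) ∂μ
      = m0 * α / m := by
  obtain ⟨ℓ, hℓ, hcal⟩ := hcal
  obtain ⟨hα₀, hα₁⟩ := hα
  have hαm := div_eq_div_of_calibSize hα₀ hcal
  let F : Fin m ⊕ Fin n → Ω → ℝ := fun c ω => a (Sum.elim X Z c ω)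
  have hF : ∀ c, Measurable (F c) := by
    rintro (j | u)
    exacts [ha.comp (hXmeas j), ha.comp (hZmeas u)]
  have hnull : ∀ i ∈ H0, ∀ c ∈ augCalib n i, μ.map (F c) = P0.map a := by
    intro i hi c hc
    obtain rfl | ⟨u, -, rfl⟩ : c = .inl i ∨ ∃ u ∈ univ, .inr u = c := by
      simpa [augCalib] using hc
    exacts [(Measure.map_map ha (hXmeas i)).symm.trans (congrArg _ (hXlaw i hi)),
      (Measure.map_map ha (hZmeas u)).symm.trans (congrArg _ (hZlaw u))]
  have hpval : ∀ ω, (fun j => empPval n a (X j ω) (fun u => Z u ω)) =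
      fun j => (calibCount (fun c => F c ω) j : ℝ) / n := fun ω =>
    funext fun j => empPval_eq n a (X j ω) (fun u => Z u ω)
  calc ∫ ω, bhFDP m α H0 (fun j => empPval n a (X j ω) (fun u => Z u ω)) ∂μ
      = ∫ ω, ∑ i ∈ H0, scoreShare ℓ i (fun c => F c ω) ∂μ := by
        simp only [hpval, bhFDP_calibCount _ hα₀.le hαm hℓ H0]
    _ = ∑ i ∈ H0, ∫ ω, scoreShare ℓ i (fun c => F c ω) ∂μ :=
        integral_finsetSum _ fun i _ => (measurable_pi_lambda _ hF).integrable_scoreShare ℓ i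
    _ = ∑ i ∈ H0, α / m := sum_congr rfl fun i hi => by
        rw [hαm, integral_scoreShare_of_iIndepFun hF (hindep.comp _ fun _ => ha) i
          (mul_le_succ_of_calibSize hα₀ hα₁ hcal)
          (fun c hc => (hnull i hi c hc).trans (hnull i hi _ (mem_insert_self _ _)).symm)]
        intro x
        rw [hnull i hi _ (mem_insert_self _ _), Measure.map_apply ha (measurableSet_singleton x)]
        exact hatomless x
    _ = m0 * α / m := by
        rw [sum_const, hcard, nsmul_eq_mul, mul_div_assoc]

/-- with a single shared calibration set `Z 0, …, Z (n-1)` of i.i.d. `P0`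
points, independent of the independent test points `X i` (the null ones having law `P0`),
and `n = ℓ m / α - 1` with `ℓ m / α` an integer, BH at level `α` applied to the empirical
p-values achieves exact FDR control `FDR = m0 * α / m`. -/
theorem bh_shared_calibration_exact_fdr_control
    {Ω 𝒳 : Type*} [MeasurableSpace Ω] [MeasurableSpace 𝒳]
    (μ : Measure Ω) [IsProbabilityMeasure μ]
    (P0 : Measure 𝒳) [IsProbabilityMeasure P0]
    (m n m0 : ℕ) (hm : 0 < m) (hn : 0 < n)
    (H0 : Finset (Fin m)) (hcard : H0.card = m0)
    (a : 𝒳 → ℝ) (ha : Measurable a)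
    (X : Fin m → Ω → 𝒳) (Z : Fin n → Ω → 𝒳)
    (hXmeas : ∀ i, Measurable (X i)) (hZmeas : ∀ j, Measurable (Z j))
    (hindep : iIndepFun
      (Sum.elim X Z : Fin m ⊕ Fin n → Ω → 𝒳) μ)
    (hXlaw : ∀ i ∈ H0, μ.map (X i) = P0)
    (hZlaw : ∀ j, μ.map (Z j) = P0)
    (hatomless : ∀ r : ℝ, P0 {x | a x = r} = 0)
    (α : ℝ) (hα : α ∈ Set.Ioc (0 : ℝ) 1)
    (hcal : ∃ ℓ : ℕ, 1 ≤ ℓ ∧ (n : ℝ) = (ℓ : ℝ) * m / α - 1) :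
    ∫ ω, bhFDP m α H0 (fun j => empPval n a (X j ω) (fun u => Z u ω)) ∂μ
      = m0 * α / m :=
  bh_shared_calibration_exact_fdr_control_general μ P0 m n m0 H0 hcard a ha X Z hXmeas hZmeas hindep
    hXlaw hZlaw hatomless α hα hcal
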